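/- arXiv:math/0510262 — 3 statements merged into one kernel-verified Lean document; each statement's English description precedes it below -/
import Mathlib

section
/- Let $\delta$ be a derivation of an associative algebra $A$ over a field of characteristic zero with no zero divisors. For $u, v \in A$ nonzero with $\delta^{i+1}(u) = 0$, $\delta^i(u) \neq 0$, $\delta^{j+1}(v) = 0$, $\delta^j(v) \neq 0$ and $j \geq 1$, the product $uv$ is not a constant of $\delta$, i.e. there exists $n \geq 1$ with $\delta^n(uv) \neq 0$. -/
open Finset in
lemma pascal_sum {M : Type*} [AddCommMonoid M] (n : ℕ) (g : ℕ → M) :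
    ∑ k ∈ range (n + 2), ((n + 1).choose k) • g k
      = ∑ k ∈ range (n + 1), (n.choose k) • g (k + 1)
        + ∑ k ∈ range (n + 1), (n.choose k) • g k := by
  rw [sum_range_succ' (fun k => ((n + 1).choose k) • g k)]
  simp only [Nat.choose_succ_succ, add_smul, sum_add_distrib, Nat.choose_zero_right, one_smul]
  have h1 : ∑ k ∈ range (n + 1), (n.choose (k + 1)) • g (k + 1) + (n.choose 0) • g 0
      = ∑ k ∈ range (n + 2), (n.choose k) • g k :=
    (sum_range_succ' (fun k => (n.choose k) • g k) (n + 1)).symm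
  have h2 : ∑ k ∈ range (n + 2), (n.choose k) • g k
      = ∑ k ∈ range (n + 1), (n.choose k) • g k := by
    rw [sum_range_succ, Nat.choose_succ_self, zero_smul, add_zero]
  rw [Nat.choose_zero_right, one_smul] at h1
  rw [h2] at h1
  rw [add_assoc, h1]

open Finset in
lemma iter_leibniz {K A : Type*} [Field K] [Ring A] [Algebra K A]
    (δ : A →ₗ[K] A) (hLeib : ∀ a b : A, δ (a * b) = δ a * b + a * δ b) :
    ∀ (n : ℕ) (a b : A),
      (⇑δ)^[n] (a * b) = ∑ k ∈ range (n + 1), (n.choose k) • ((⇑δ)^[k] a * (⇑δ)^[n - k] b) := by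
  intro n
  induction n with
  | zero => simp
  | succ n ih =>
    intro a b
    rw [Function.iterate_succ_apply, hLeib, iterate_map_add, ih, ih]
    have key := pascal_sum n (fun k => (⇑δ)^[k] a * (⇑δ)^[n + 1 - k] b)
    have e1 : ∑ k ∈ range (n + 1 + 1),
        ((n + 1).choose k) • ((⇑δ)^[k] a * (⇑δ)^[n + 1 - k] b)
        = ∑ k ∈ range (n + 2), ((n + 1).choose k)
            • ((fun k => (⇑δ)^[k] a * (⇑δ)^[n + 1 - k] b) k) := rfl
    rw [e1, key]
    congr 1
    · apply sum_congr rfl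
      intro k hk
      simp only [mem_range] at hk
      have hs : n + 1 - (k + 1) = n - k := by omega
      simp only [hs, Function.iterate_succ_apply]
    · apply sum_congr rfl
      intro k hk
      simp only [mem_range] at hk
      have hs : n + 1 - k = (n - k) + 1 := by omega
      simp only [hs, Function.iterate_succ_apply]

theorem stmt_4 (K A : Type*) [Field K] [CharZero K] [Ring A] [IsDomain A] [Algebra K A]
    (δ : A →ₗ[K] A) (hLeib : ∀ a b : A, δ (a * b) = δ a * b + a * δ b)
    (u v : A) (hu : u ≠ 0) (hv : v ≠ 0) (i j : ℕ)
    (hiu : (⇑δ)^[i + 1] u = 0) (hiu' : (⇑δ)^[i] u ≠ 0)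
    (hjv : (⇑δ)^[j + 1] v = 0) (hjv' : (⇑δ)^[j] v ≠ 0) (hj : 1 ≤ j) :
    ∃ n : ℕ, 1 ≤ n ∧ (⇑δ)^[n] (u * v) ≠ 0 := by
  haveI : CharZero A := charZero_of_injective_algebraMap (algebraMap K A).injective
  have hu0 : ∀ k, i + 1 ≤ k → (⇑δ)^[k] u = 0 := by
    intro k hk
    have : k = (k - (i+1)) + (i+1) := by omega
    rw [this, Function.iterate_add_apply, hiu]
    exact Function.iterate_fixed (map_zero δ) _
  have hv0 : ∀ k, j + 1 ≤ k → (⇑δ)^[k] v = 0 := by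
    intro k hk
    have : k = (k - (j+1)) + (j+1) := by omega
    rw [this, Function.iterate_add_apply, hjv]
    exact Function.iterate_fixed (map_zero δ) _
  refine ⟨i + j, by omega, ?_⟩
  rw [iter_leibniz δ hLeib]
  rw [Finset.sum_eq_single i]
  · have : i + j - i = j := by omega
    rw [this]
    intro h
    rw [nsmul_eq_mul] at h
    rcases mul_eq_zero.mp h with h | h
    · exact (Nat.choose_pos (show i ≤ i + j by omega)).ne' (Nat.cast_eq_zero.mp h)
    · rcases mul_eq_zero.mp h with h | h
      · exact hiu' h
      · exact hjv' h
  · intro k hk hki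
    rcases lt_or_gt_of_ne hki with h | h
    · rw [hv0 (i + j - k) (by omega), mul_zero, smul_zero]
    · rw [hu0 k (by omega), zero_mul, smul_zero]
  · intro h
    simp only [Finset.mem_range] at h
    omega
end

section
/- Let $U$ be a ring with an exhaustive filtration $\{U_n\}_{n \geq 0}$ ($U_0 \ni 1$, $U_m U_n \subseteq U_{m+n}$, $U_n \subseteq U_{n+1}$, $\bigcup U_n = U$) whose associated graded ring $\mathrm{Gr}\,U$ is a domain. Let $\widetilde{U} = \bigoplus_{n\geq 0} U_n z^n \subseteq U[z]$ be the Rees ring. For $x \in U_n$ set $\widetilde{x} = x z^n$. If the left module $\widetilde{U}/\widetilde{U}\widetilde{x}$ is a faithful $\widetilde{U}$-module, then $U/Ux$ is a faithful $U$-module. -/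
/-- Rees-ring faithfulness implies faithfulness, when `Gr U` is a domain.
The Rees ring is realized as the subring of `U[z]` of polynomials whose `k`-th
coefficient lies in `U_k`, and `x̃ = x zⁿ` as `C x * X ^ n`. -/
theorem stmt_8 (U : Type*) [Ring U] (F : ℕ → AddSubgroup U)
    (hone : (1 : U) ∈ F 0)
    (hmono : ∀ k, F k ≤ F (k + 1))
    (hmul : ∀ m k (a b : U), a ∈ F m → b ∈ F k → a * b ∈ F (m + k))
    (hexh : ∀ u : U, ∃ k, u ∈ F k)
    -- `Gr U` is a domain: leading terms multiply to leading terms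
    (hGr : ∀ (m k : ℕ) (a b : U), a ≠ 0 → b ≠ 0 →
      a ∈ F m → (∀ l, l < m → a ∉ F l) → b ∈ F k → (∀ l, l < k → b ∉ F l) →
      a * b ≠ 0 ∧ ∀ l, l < m + k → a * b ∉ F l)
    (n : ℕ) (x : U) (hx : x ∈ F n)
    -- `Ũ/Ũx̃` is a faithful `Ũ`-module
    (hfaith : ∀ p : Polynomial U, (∀ k, p.coeff k ∈ F k) →
      (∀ q : Polynomial U, (∀ k, q.coeff k ∈ F k) →
        ∃ r : Polynomial U, (∀ k, r.coeff k ∈ F k) ∧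
          p * q = r * (Polynomial.C x * Polynomial.X ^ n)) →
      p = 0) :
    -- then `U/Ux` is a faithful `U`-module
    ∀ a : U, (∀ b : U, ∃ c : U, a * b = c * x) → a = 0 := by
  classical
  intro a ha
  by_cases hx0 : x = 0
  · obtain ⟨c, hc⟩ := ha 1
    simpa [hx0] using hc
  have mono : ∀ {k l : ℕ}, k ≤ l → F k ≤ F l := by
    intro k l h
    induction h with
    | refl => exact le_rfl
    | step h ih => exact ih.trans (hmono _)
  have dmem : ∀ u : U, u ∈ F (Nat.find (hexh u)) := fun u => Nat.find_spec (hexh u)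
  have dmin : ∀ (u : U) (l), l < Nat.find (hexh u) → u ∉ F l :=
    fun u l hl => Nat.find_min (hexh u) hl
  set d : U → ℕ := fun u => Nat.find (hexh u) with hd
  have key : ∀ (c : U) (s : ℕ), c ≠ 0 → c * x ∈ F s → d c ≤ s := by
    intro c s hc hcx
    obtain ⟨hne, hlow⟩ :=
      hGr (d c) (d x) c x hc hx0 (dmem c) (dmin c) (dmem x) (dmin x)
    by_contra h
    push_neg at h
    exact hlow s (by omega) hcx
  set da := d a with hda
  set m := da + n with hm
  have hp := hfaith (Polynomial.C a * Polynomial.X ^ m) ?_ ?_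
  · have := congrArg (fun p => Polynomial.coeff p m) hp
    simpa using this
  · intro k
    rw [Polynomial.coeff_C_mul, Polynomial.coeff_X_pow]
    by_cases hk : m = k
    · subst hk
      simpa using mono (show da ≤ m by omega) (dmem a)
    · rw [if_neg (Ne.symm hk), mul_zero]
      exact zero_mem _
  · intro q hq
    set c : ℕ → U := fun j =>
      if h : q.coeff j = 0 then 0 else Classical.choose (ha (q.coeff j)) with hc
    have hcspec : ∀ j, a * q.coeff j = c j * x := by
      intro j
      by_cases h : q.coeff j = 0
      · simp [hc, h]
      · simpa [hc, h] using Classical.choose_spec (ha (q.coeff j))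
    have hcmem : ∀ j, c j ∈ F (j + da) := by
      intro j
      by_cases hcj : c j = 0
      · rw [hcj]; exact zero_mem _
      · have hmem : c j * x ∈ F (da + j) := by
          rw [← hcspec j]
          exact hmul da j a _ (dmem a) (hq j)
        have hdc : d (c j) ≤ da + j := key (c j) (da + j) hcj hmem
        exact mono (by omega : d (c j) ≤ j + da) (dmem (c j))
    refine ⟨∑ j ∈ q.support, Polynomial.C (c j) * Polynomial.X ^ (j + da), ?_, ?_⟩
    · intro k
      rw [Polynomial.finset_sum_coeff]
      apply AddSubgroup.sum_mem
      intro j hj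
      rw [Polynomial.coeff_C_mul, Polynomial.coeff_X_pow]
      by_cases hk : j + da = k
      · subst hk
        simpa using hcmem j
      · rw [if_neg (Ne.symm hk), mul_zero]
        exact zero_mem _
    · conv_lhs => rw [q.as_sum_support]
      rw [Finset.mul_sum, Finset.sum_mul]
      refine Finset.sum_congr rfl fun j hj => ?_
      have e1 : Polynomial.C a * Polynomial.X ^ m * Polynomial.monomial j (q.coeff j)
          = Polynomial.monomial (m + j) (a * q.coeff j) := by
        rw [Polynomial.C_mul_X_pow_eq_monomial, Polynomial.monomial_mul_monomial]
      have e2 : Polynomial.C (c j) * Polynomial.X ^ (j + da) *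
            (Polynomial.C x * Polynomial.X ^ n)
          = Polynomial.monomial (j + da + n) (c j * x) := by
        rw [Polynomial.C_mul_X_pow_eq_monomial, Polynomial.C_mul_X_pow_eq_monomial,
          Polynomial.monomial_mul_monomial]
      rw [e1, e2, hcspec j, show m + j = j + da + n by omega]
end

section
/- Let $A = \bigoplus_{n\geq 0} A(n)$ be a graded $K$-algebra which is a domain with $\dim_K A(n) < \infty$ for all $n$, and suppose that for every nonzero $L \in A(1)$ the annihilator of the left module $A/AL$ is a prime ideal. Then the map $A(1)\setminus\{0\} \to \mathrm{Spec}\,A$, $L \mapsto \mathrm{Ann}_A(A/AL)$, is continuous, where $\mathrm{Spec}\,A$ carries the Jacobson (Zariski) topology with closed sets $V(I) = \{P : I \subseteq P\}$. -/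
/-!
Since `Ann_A(A/AL) = {F | F A ⊆ AL}`, the preimage of `V(I)` is the intersection, over the
products `G = F x` with `F ∈ I`, of the loci `{L | G ∈ AL}`, and zero loci are stable under
arbitrary intersections. In a graded domain, `G ∈ AL` means that `G₀ = 0` and that every
`G_{m+1}` lies in the image of the injective map `A(m) → A(m+1)`, `y ↦ y L`. That happens exactly
when appending `G_{m+1}` to the image of a basis of `A(m)` gives a linearly dependent family,
i.e. when all maximal minors of a matrix whose entries are polynomial in the coordinates of `L`
vanish.
-/

open Module

theorem Matrix.linearIndependent_rows_iff_exists_det_submatrix_ne_zero {K : Type*} [Field K]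
    {p q : ℕ} (M : Matrix (Fin p) (Fin q) K) :
    LinearIndependent K M.row ↔ ∃ s : Fin p → Fin q, (M.submatrix id s).det ≠ 0 := by
  constructor
  · intro hM
    -- row rank = column rank, so some `p` columns form a basis of `Fin p → K`
    have hspan : Submodule.span K (Set.range M.col) = ⊤ := by
      apply Submodule.eq_top_of_finrank_eq
      rw [← M.rank_eq_finrank_span_cols, hM.rank_matrix, Fintype.card_fin, finrank_fin_fun]
    obtain ⟨κ, a, -, hspan_a, hli⟩ := exists_linearIndependent' K M.col
    have := hli.finite_of_isNoetherian
    have := Fintype.ofFinite κ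
    have hcard : Fintype.card κ = p := by
      rw [linearIndependent_iff_card_eq_finrank_span.mp hli, Set.finrank, hspan_a, hspan,
        finrank_top, finrank_fin_fun]
    let e : Fin p ≃ κ := (Fintype.equivFinOfCardEq hcard).symm
    refine ⟨a ∘ e, ?_⟩
    rw [← isUnit_iff_ne_zero, ← Matrix.isUnit_iff_isUnit_det,
      ← Matrix.linearIndependent_cols_iff_isUnit]
    exact hli.comp e e.injective
  · rintro ⟨s, hs⟩
    exact LinearIndependent.of_comp (LinearMap.funLeft K K s)
      (Matrix.linearIndependent_rows_of_det_ne_zero hs)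

theorem LinearMap.mem_range_iff_not_linearIndependent_snoc {K V W : Type*} [Field K]
    [AddCommGroup V] [Module K V] [AddCommGroup W] [Module K W] {p : ℕ} (b : Basis (Fin p) K V)
    {T : V →ₗ[K] W} (hT : Function.Injective T) (w : W) :
    w ∈ range T ↔ ¬ LinearIndependent K (Fin.snoc (T ∘ b) w : Fin (p + 1) → W) := by
  rw [linearIndependent_finSnoc, Set.range_comp, ← Submodule.map_span, b.span_eq,
    Submodule.map_top]
  have := b.linearIndependent.map' T (ker_eq_bot.mpr hT)
  tauto

namespace MvPolynomial

variable {σ K : Type*} [Field K]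

theorem mem_zeroLocus_iff_le_ker {J : Ideal (MvPolynomial σ K)} {c : σ → K} :
    c ∈ zeroLocus K J ↔ J ≤ RingHom.ker (eval c) := by
  simp [SetLike.le_def]

theorem zeroLocus_sup (J J' : Ideal (MvPolynomial σ K)) :
    zeroLocus K (J ⊔ J') = zeroLocus K J ∩ zeroLocus K J' := by
  ext c
  simp only [Set.mem_inter_iff, mem_zeroLocus_iff_le_ker, sup_le_iff]

theorem zeroLocus_iSup {ι : Sort*} (J : ι → Ideal (MvPolynomial σ K)) :
    zeroLocus K (⨆ i, J i) = ⋂ i, zeroLocus K (J i) := by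
  ext c
  simp only [Set.mem_iInter, mem_zeroLocus_iff_le_ker, iSup_le_iff]

theorem exists_eval_eq_linearMap [Fintype σ] (f : (σ → K) →ₗ[K] K) :
    ∃ P : MvPolynomial σ K, ∀ c, eval c P = f c := by
  classical
  refine ⟨∑ k, C (f fun j => if k = j then 1 else 0) * X k, fun c => ?_⟩
  simp [f.pi_apply_eq_sum_univ c, mul_comm]

theorem exists_zeroLocus_eq_setOf_not_linearIndependent {p q : ℕ}
    (F : Fin p → (σ → K) → Fin q → K)
    (hF : ∀ j i, ∃ P : MvPolynomial σ K, ∀ c, eval c P = F j c i) :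
    ∃ J : Ideal (MvPolynomial σ K),
      zeroLocus K J = {c | ¬ LinearIndependent K fun j => F j c} := by
  choose P hP using hF
  refine ⟨Ideal.span (Set.range fun s : Fin p → Fin q => ((Matrix.of P).submatrix id s).det), ?_⟩
  ext c
  have hrows : (fun j => F j c) = ((Matrix.of P).map (eval c)).row :=
    funext₂ fun j i => (hP j i c).symm
  rw [zeroLocus_span]
  change _ ↔ ¬ LinearIndependent K fun j => F j c
  rw [hrows, Matrix.linearIndependent_rows_iff_exists_det_submatrix_ne_zero]
  simp [RingHom.map_det, RingHom.mapMatrix_apply, Matrix.submatrix_map]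

/-- `S` is Zariski closed relative to `U`. -/
def IsZeroLocusOn (U S : Set (σ → K)) : Prop :=
  ∃ J : Ideal (MvPolynomial σ K), U ∩ S = zeroLocus K J ∩ U

namespace IsZeroLocusOn

variable {U U' S S' : Set (σ → K)}

theorem of_zeroLocus_eq {J : Ideal (MvPolynomial σ K)} (h : zeroLocus K J = S) :
    IsZeroLocusOn U S :=
  ⟨J, by rw [h, Set.inter_comm]⟩

theorem setOf_const (P : Prop) : IsZeroLocusOn U {_c | P} := by
  by_cases hP : P
  · exact of_zeroLocus_eq (J := ⊥) (by simp [hP])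
  · exact of_zeroLocus_eq (J := ⊤) (by simp [hP])

theorem inter (h : IsZeroLocusOn U S) (h' : IsZeroLocusOn U S') : IsZeroLocusOn U (S ∩ S') := by
  obtain ⟨J, hJ⟩ := h
  obtain ⟨J', hJ'⟩ := h'
  refine ⟨J ⊔ J', ?_⟩
  rw [zeroLocus_sup]
  ext c
  have := congr(c ∈ $hJ)
  have := congr(c ∈ $hJ')
  simp only [Set.mem_inter_iff] at *
  tauto

theorem iInter {ι : Sort*} {S : ι → Set (σ → K)} (h : ∀ i, IsZeroLocusOn U (S i)) :
    IsZeroLocusOn U (⋂ i, S i) := by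
  choose J hJ using h
  refine ⟨⨆ i, J i, ?_⟩
  rw [zeroLocus_iSup]
  ext c
  have := fun i => congr(c ∈ $(hJ i))
  simp only [Set.mem_inter_iff, Set.mem_iInter] at *
  grind

theorem mono (h : IsZeroLocusOn U' S) (hU : U ⊆ U') : IsZeroLocusOn U S := by
  obtain ⟨J, hJ⟩ := h
  refine ⟨J, ?_⟩
  rw [← Set.inter_eq_left.mpr hU, Set.inter_assoc, hJ]
  ext c
  simp only [Set.mem_inter_iff]
  tauto

theorem setOf_mem_range [Fintype σ] {V W : Type*} [AddCommGroup V] [Module K V]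
    [FiniteDimensional K V] [AddCommGroup W] [Module K W] [FiniteDimensional K W]
    (Φ : (σ → K) →ₗ[K] V →ₗ[K] W) (w : W) :
    IsZeroLocusOn {c | Function.Injective (Φ c)} {c | w ∈ LinearMap.range (Φ c)} := by
  let bV := finBasis K V
  let bW := finBasis K W
  let F (j : Fin (finrank K V + 1)) (c : σ → K) : W := Fin.snoc (α := fun _ => W) (Φ c ∘ bV) w j
  obtain ⟨J, hJ⟩ := exists_zeroLocus_eq_setOf_not_linearIndependent
    (fun j c => bW.equivFun (F j c)) fun j i => by
      induction j using Fin.lastCases with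
      | last => exact ⟨C (bW.equivFun w i), by simp [F]⟩
      | cast j =>
        simpa [F] using exists_eval_eq_linearMap
          (LinearMap.proj i ∘ₗ bW.equivFun.toLinearMap ∘ₗ LinearMap.applyₗ (bV j) ∘ₗ Φ)
  have hrange {c} (hc : Function.Injective (Φ c)) :
      w ∈ LinearMap.range (Φ c) ↔ ¬ LinearIndependent K fun j => bW.equivFun (F j c) := by
    rw [LinearMap.mem_range_iff_not_linearIndependent_snoc bV hc]
    exact not_congr (bW.equivFun.toLinearMap.linearIndependent_iff bW.equivFun.ker).symm
  refine ⟨J, Set.ext fun c => ?_⟩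
  rw [hJ]
  by_cases hc : Function.Injective (Φ c)
  · simp only [Set.mem_inter_iff, Set.mem_ofPred_eq, hc, ← hrange hc, true_and, and_true]
  · simp [hc]

end IsZeroLocusOn

end MvPolynomial

section Graded

variable {ι K A : Type*} [CommSemiring K] [Semiring A] [Algebra K A]

def gradedMulRight [Add ι] (𝒜 : ι → Submodule K A) [SetLike.GradedMul 𝒜] (i j : ι) :
    𝒜 j →ₗ[K] 𝒜 i →ₗ[K] 𝒜 (i + j) :=
  LinearMap.mk₂ K (fun L y => ⟨y * L, SetLike.mul_mem_graded y.2 L.2⟩)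
    (fun _ _ _ => Subtype.ext (mul_add _ _ _))
    (fun _ _ _ => Subtype.ext (mul_smul_comm _ _ _))
    (fun _ _ _ => Subtype.ext (add_mul _ _ _))
    (fun _ _ _ => Subtype.ext (smul_mul_assoc _ _ _))

theorem gradedMulRight_injective [Add ι] [IsRightCancelMulZero A] (𝒜 : ι → Submodule K A)
    [SetLike.GradedMul 𝒜] {i j : ι} {L : 𝒜 j} (hL : L ≠ 0) :
    Function.Injective (gradedMulRight 𝒜 i j L) := fun _ _ h =>
  Subtype.ext (mul_right_cancel₀ (by simpa using hL) congr(($h : A)))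

theorem mem_span_singleton_iff_decompose (𝒜 : ℕ → Submodule K A) [GradedAlgebra 𝒜] (L : 𝒜 1)
    (G : A) :
    G ∈ Ideal.span {(L : A)} ↔ (DirectSum.decompose 𝒜 G 0 : A) = 0 ∧
      ∀ m, DirectSum.decompose 𝒜 G (m + 1) ∈ LinearMap.range (gradedMulRight 𝒜 m 1 L) := by
  constructor
  · intro hG
    obtain ⟨a, rfl⟩ := Ideal.mem_span_singleton'.mp hG
    refine ⟨DirectSum.coe_decompose_mul_of_right_mem_of_not_le 𝒜 L.2 (by omega),
      fun m => ⟨DirectSum.decompose 𝒜 a m, Subtype.ext ?_⟩⟩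
    rw [DirectSum.coe_decompose_mul_of_right_mem_of_le 𝒜 L.2 (by omega)]
    rfl
  · rintro ⟨hG₀, hG⟩
    classical
    rw [← DirectSum.sum_support_decompose 𝒜 G]
    refine Ideal.sum_mem _ fun n _ => ?_
    cases n with
    | zero => simp [hG₀]
    | succ m =>
      obtain ⟨y, hy⟩ := hG m
      exact Ideal.mem_span_singleton'.mpr ⟨y, congr(($hy : A))⟩

end Graded

theorem MvPolynomial.IsZeroLocusOn.setOf_mem_span_singleton {σ K A : Type*} [Fintype σ] [Field K]
    [Ring A] [IsRightCancelMulZero A] [Algebra K A] (𝒜 : ℕ → Submodule K A) [GradedAlgebra 𝒜]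
    [∀ n, FiniteDimensional K (𝒜 n)] (L : (σ → K) →ₗ[K] 𝒜 1) (G : A) :
    IsZeroLocusOn {c | L c ≠ 0} {c | G ∈ Ideal.span {(L c : A)}} := by
  have hdeg : {c | G ∈ Ideal.span {(L c : A)}} =
      {_c | (DirectSum.decompose 𝒜 G 0 : A) = 0} ∩
        ⋂ m, {c | DirectSum.decompose 𝒜 G (m + 1) ∈
          LinearMap.range (gradedMulRight 𝒜 m 1 (L c))} := by
    ext c
    simp [mem_span_singleton_iff_decompose]
  rw [hdeg]
  exact (setOf_const _).inter <| iInter fun m =>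
    (setOf_mem_range (gradedMulRight 𝒜 m 1 ∘ₗ L) _).mono fun _ hc => gradedMulRight_injective 𝒜 hc

theorem stmt_11_general (K A : Type*) [Field K] [Ring A] [IsDomain A] [Algebra K A]
    (𝒜 : ℕ → Submodule K A) [GradedAlgebra 𝒜]
    (hfin : ∀ n, FiniteDimensional K (𝒜 n))
    (d : ℕ) (b : Module.Basis (Fin d) K (𝒜 1)) :
    -- continuity into Spec A with the Jacobson/Zariski topology: the preimage of each
    -- closed set V(I) is closed in A(1) \ {0}
    ∀ I : Ideal A, ∃ J : Ideal (MvPolynomial (Fin d) K),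
      {c : Fin d → K | (∑ i, c i • b i : 𝒜 1) ≠ 0 ∧
          I ≤ Module.annihilator A (A ⧸ (Ideal.span {((∑ i, c i • b i : 𝒜 1) : A)} : Ideal A))} =
        MvPolynomial.zeroLocus K J ∩ {c : Fin d → K | (∑ i, c i • b i : 𝒜 1) ≠ 0} := by
  intro I
  let L : (Fin d → K) →ₗ[K] 𝒜 1 := b.equivFun.symm.toLinearMap
  have hL (c : Fin d → K) : L c = ∑ i, c i • b i := b.equivFun_symm_apply c
  obtain ⟨J, hJ⟩ := MvPolynomial.IsZeroLocusOn.iInter fun F : I =>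
    MvPolynomial.IsZeroLocusOn.iInter fun x : A =>
      MvPolynomial.IsZeroLocusOn.setOf_mem_span_singleton 𝒜 L (F * x)
  refine ⟨J, Eq.trans ?_ (by simpa only [hL] using hJ)⟩
  ext c
  simp [Submodule.annihilator_quotient, Submodule.mem_colon, SetLike.le_def]

theorem stmt_11 (K A : Type*) [Field K] [Ring A] [IsDomain A] [Algebra K A]
    (𝒜 : ℕ → Submodule K A) [GradedAlgebra 𝒜]
    (hfin : ∀ n, FiniteDimensional K (𝒜 n))
    (hprime : ∀ L : A, L ∈ 𝒜 1 → L ≠ 0 →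
      (Module.annihilator A (A ⧸ (Ideal.span {L} : Ideal A))).IsPrime)
    (d : ℕ) (b : Module.Basis (Fin d) K (𝒜 1)) :
    -- continuity into Spec A with the Jacobson/Zariski topology: the preimage of each
    -- closed set V(I) is closed in A(1) \ {0}
    ∀ I : Ideal A, ∃ J : Ideal (MvPolynomial (Fin d) K),
      {c : Fin d → K | (∑ i, c i • b i : 𝒜 1) ≠ 0 ∧
          I ≤ Module.annihilator A (A ⧸ (Ideal.span {((∑ i, c i • b i : 𝒜 1) : A)} : Ideal A))} =
        MvPolynomial.zeroLocus K J ∩ {c : Fin d → K | (∑ i, c i • b i : 𝒜 1) ≠ 0} :=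
  stmt_11_general K A 𝒜 hfin d b
end
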